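/- arXiv:2202.03000 — 3 statements merged into one kernel-verified Lean document; each statement's English description precedes it below -/
import Mathlib

section
/- Let G be a finitely generated torsion-free nilpotent group and let φ : G → G be a surjective group homomorphism. Then φ is injective; in particular, φ is an automorphism of G. -/
/-- A monoid is torsion-free if no nontrivial element has finite order
(the definition removed from Mathlib, restored with its old meaning). -/
def Monoid.IsTorsionFree (G : Type*) [Monoid G] : Prop :=
  ∀ g : G, g ≠ 1 → ¬IsOfFinOrder g

/-!
Finitely generated nilpotent groups are Noetherian: every subgroup is finitely generated. Indeed,
if `S` generates `G`, then `γₙ` is generated modulo `γₙ₊₁` by the finitely many left-normed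
commutators of weight `n + 1` in `S`, so every term of the lower central series is finitely
generated. The last nontrivial term `N` is abelian, hence Noetherian, and `G ⧸ N` has smaller
class, so a subgroup `H` is finitely generated because `H ⊓ N` and the image of `H` in `G ⧸ N`
are.

A Noetherian group is Hopfian: for a surjective endomorphism `φ` the kernels of the iterates
`φⁿ` form an increasing chain, which stabilises since its union is finitely generated; if
`ker φⁿ = ker φⁿ⁺¹` and `φ x = 1`, writing `x = φⁿ y` gives `φⁿ⁺¹ y = 1`, so `x = φⁿ y = 1`.
-/

open Subgroup
open scoped commutatorElement IsMulCommutative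

section

variable {G : Type*} [Group G]

theorem CommGroup.subgroup_fg {A : Type*} [CommGroup A] [Group.FG A] (H : Subgroup A) : H.FG := by
  have : IsNoetherian ℤ (Additive A) :=
    have : Module.Finite ℤ (Additive A) := Module.Finite.iff_addGroup_fg.mpr inferInstance
    isNoetherian_of_isNoetherianRing_of_finite ℤ _
  have h := IsNoetherian.noetherian (AddSubgroup.toIntSubmodule H.toAddSubgroup)
  rw [Submodule.fg_iff_addSubgroup_fg] at h
  exact (fg_iff_add_fg H).mpr h

theorem Subgroup.fg_of_le_of_isMulCommutative {N H : Subgroup G} [IsMulCommutative N]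
    (hN : N.FG) (hH : H ≤ N) : H.FG := by
  have : Group.FG N := (Group.fg_iff_subgroup_fg N).mpr hN
  have : Group.FG (H.subgroupOf N) :=
    (Group.fg_iff_subgroup_fg _).mpr (CommGroup.subgroup_fg _)
  exact (Group.fg_iff_subgroup_fg H).mp <|
    Group.fg_of_surjective (f := (subgroupOfEquivOfLe hH).toMonoidHom)
      (subgroupOfEquivOfLe hH).surjective

theorem Subgroup.fg_of_fg_map_of_fg_inf_ker {G' : Type*} [Group G'] (f : G →* G')
    {H : Subgroup G} (hmap : (H.map f).FG) (hker : (H ⊓ f.ker).FG) : H.FG := by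
  classical
  obtain ⟨B, hB⟩ := hmap
  have hBH : (B : Set G') ⊆ f '' H := by rw [← coe_map, ← hB]; exact subset_closure
  obtain ⟨T, hTsub, rfl⟩ := Finset.subset_set_image_iff.mp hBH
  have hTH : closure (T : Set G) ≤ H := closure_le _ |>.mpr hTsub
  suffices H = closure T ⊔ (H ⊓ f.ker) from this ▸ FG.sup ⟨T, rfl⟩ hker
  refine le_antisymm (fun h hh => ?_) (sup_le hTH inf_le_left)
  obtain ⟨t, ht, hth⟩ : f h ∈ (closure (T : Set G)).map f := by
    rw [MonoidHom.map_closure, ← Finset.coe_image, hB]; exact mem_map_of_mem f hh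
  have hker : t⁻¹ * h ∈ H ⊓ f.ker := mem_inf.mpr ⟨mul_mem (inv_mem (hTH ht)) hh, by simp [hth]⟩
  simpa using mul_mem (mem_sup_left ht) (mem_sup_right hker)

theorem Subgroup.commutator_closure_le {R : Subgroup G} [R.Normal] {X S : Set G}
    (h : ∀ x ∈ X, ∀ s ∈ S, ⁅x, s⁆ ∈ R) : ⁅closure X, closure S⁆ ≤ R := by
  set π := QuotientGroup.mk' R
  rw [← QuotientGroup.ker_mk' R, ← map_eq_bot_iff, map_commutator, MonoidHom.map_closure,
    MonoidHom.map_closure, commutator_eq_bot_iff_le_centralizer, centralizer_closure, closure_le]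
  rintro _ ⟨x, hx, rfl⟩
  rw [SetLike.mem_coe, mem_centralizer_iff]
  rintro _ ⟨s, hs, rfl⟩
  have : π ⁅x, s⁆ = 1 := (QuotientGroup.eq_one_iff _).mpr (h x hx s hs)
  rw [map_commutatorElement, commutatorElement_eq_one_iff_mul_comm] at this
  exact this.symm

/-- `leftNormedCommutators S n` consists of the commutators `⁅⋯⁅s₀, s₁⁆, ⋯, sₙ⁆` with all `sᵢ ∈ S`;
they have weight `n + 1`, matching `lowerCentralSeries ⊤ 0 = ⊤`. -/
def leftNormedCommutators (S : Set G) : ℕ → Set G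
  | 0 => S
  | n + 1 => Set.image2 (⁅·, ·⁆) (leftNormedCommutators S n) S

theorem leftNormedCommutators_finite {S : Set G} (hS : S.Finite) :
    ∀ n, (leftNormedCommutators S n).Finite
  | 0 => hS
  | n + 1 => (leftNormedCommutators_finite hS n).image2 _ hS

theorem leftNormedCommutators_subset_lowerCentralSeries (S : Set G) :
    ∀ n, leftNormedCommutators S n ⊆ (⊤ : Subgroup G).lowerCentralSeries n
  | 0 => fun _ _ => mem_top _
  | n + 1 => by
    rintro _ ⟨x, hx, s, -, rfl⟩
    exact commutator_mem_commutator (leftNormedCommutators_subset_lowerCentralSeries S n hx)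
      (mem_top s)

theorem Subgroup.lowerCentralSeries_eq_closure_leftNormedCommutators_sup {S : Set G}
    (hS : closure S = ⊤) (n : ℕ) :
    (⊤ : Subgroup G).lowerCentralSeries n =
      closure (leftNormedCommutators S n) ⊔ (⊤ : Subgroup G).lowerCentralSeries (n + 1) := by
  induction n with
  | zero => exact (eq_top_iff.mpr (hS ▸ le_sup_left)).symm
  | succ n ih =>
    set γ := (⊤ : Subgroup G).lowerCentralSeries
    set R := closure (leftNormedCommutators S (n + 1)) ⊔ γ (n + 2)
    have hR_le : R ≤ γ (n + 1) :=
      sup_le (closure_le _ |>.mpr (leftNormedCommutators_subset_lowerCentralSeries S (n + 1)))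
        (Subgroup.lowerCentralSeries_antitone _ n.succ.le_succ)
    have : R.Normal :=
      commutator_top_right_le_iff.mp ((commutator_mono hR_le le_rfl).trans le_sup_right)
    have hγn : γ n = closure (leftNormedCommutators S n ∪ γ (n + 1)) := by
      rw [Subgroup.closure_union, closure_eq, ← ih]
    refine le_antisymm ?_ hR_le
    calc γ (n + 1) = ⁅closure (leftNormedCommutators S n ∪ γ (n + 1)), closure S⁆ := by
          rw [hS, ← hγn]; rfl
      _ ≤ R := by
        refine commutator_closure_le fun x hx s hs => hx.elim (fun hx => ?_) (fun hx => ?_)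
        · exact mem_sup_left (subset_closure (Set.mem_image2_of_mem hx hs))
        · exact mem_sup_right (commutator_mem_commutator hx (mem_top s))

theorem Subgroup.lowerCentralSeries_fg [Group.FG G] {c : ℕ}
    (hc : (⊤ : Subgroup G).lowerCentralSeries c = ⊥) (n : ℕ) :
    ((⊤ : Subgroup G).lowerCentralSeries n).FG := by
  obtain ⟨S, hS, hSfin⟩ := Group.fg_iff.mp ‹_›
  induction h : c - n generalizing n with
  | zero =>
    have : (⊤ : Subgroup G).lowerCentralSeries n ≤ (⊤ : Subgroup G).lowerCentralSeries c :=
      Subgroup.lowerCentralSeries_antitone _ (by omega)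
    rw [hc, le_bot_iff] at this
    exact this ▸ FG.bot
  | succ d ih =>
    rw [lowerCentralSeries_eq_closure_leftNormedCommutators_sup hS n]
    exact ((fg_iff _).mpr ⟨_, rfl, leftNormedCommutators_finite hSfin n⟩).sup
      (ih (n + 1) (by omega))

theorem Subgroup.fg_of_lowerCentralSeries_eq_bot [Group.FG G] {n : ℕ}
    (hn : (⊤ : Subgroup G).lowerCentralSeries n = ⊥) (H : Subgroup G) : H.FG := by
  induction n generalizing G with
  | zero => exact (eq_bot_iff.mpr (hn ▸ le_top : H ≤ ⊥)) ▸ FG.bot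
  | succ n ih =>
    set N := (⊤ : Subgroup G).lowerCentralSeries n
    have : IsMulCommutative N := by
      rw [← le_centralizer_iff_isMulCommutative, ← commutator_eq_bot_iff_le_centralizer,
        eq_bot_iff, ← hn]
      exact commutator_mono le_rfl le_top
    have hquot : (⊤ : Subgroup (G ⧸ N)).lowerCentralSeries n = ⊥ := by
      rw [← map_top_of_surjective _ (QuotientGroup.mk'_surjective N), ← map_lowerCentralSeries,
        QuotientGroup.map_mk'_self]
    refine fg_of_fg_map_of_fg_inf_ker (QuotientGroup.mk' N) (ih hquot _) ?_
    rw [QuotientGroup.ker_mk']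
    exact fg_of_le_of_isMulCommutative (lowerCentralSeries_fg hn n) inf_le_right

theorem Subgroup.FG.exists_le_of_le_iSup {ι : Type*} [Nonempty ι] {K : ι → Subgroup G}
    (hK : Directed (· ≤ ·) K) {H : Subgroup G} (hH : H.FG) (hle : H ≤ ⨆ i, K i) :
    ∃ i, H ≤ K i := by
  classical
  obtain ⟨T, rfl⟩ := hH
  have hmem : ∀ t ∈ T, ∃ i, t ∈ K i := fun t ht =>
    (mem_iSup_of_directed hK).mp (hle (subset_closure ht))
  choose! ν hν using hmem
  obtain ⟨i, hi⟩ := hK.finset_le (T.image ν)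
  exact ⟨i, closure_le _ |>.mpr fun t ht => hi _ (Finset.mem_image_of_mem ν ht) (hν t ht)⟩

theorem Monoid.End.injective_of_surjective_of_forall_fg (hfg : ∀ H : Subgroup G, H.FG)
    {φ : Monoid.End G} (hφ : Function.Surjective φ) : Function.Injective φ := by
  let K (n : ℕ) : Subgroup G := MonoidHom.ker (φ ^ n)
  have hmem (n : ℕ) (x : G) : x ∈ K n ↔ φ^[n] x = 1 := by
    rw [← Monoid.End.coe_pow]; rfl
  have hK : Monotone K := monotone_nat_of_le_succ fun n x hx => by
    rw [hmem, Function.iterate_succ_apply', (hmem n x).mp hx, map_one]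
  obtain ⟨n, hn⟩ := (hfg (⨆ n, K n)).exists_le_of_le_iSup hK.directed_le le_rfl
  refine (injective_iff_map_eq_one φ).mpr fun x hx => ?_
  obtain ⟨y, rfl⟩ := hφ.iterate n x
  have hy : y ∈ K (n + 1) := by rwa [hmem, Function.iterate_succ_apply']
  exact (hmem n y).mp (hn (le_iSup K (n + 1) hy))

end

theorem surjective_endo_of_fg_torsionFree_nilpotent_is_injective_general
    {G : Type*} [Group G] [Group.FG G] [Group.IsNilpotent G]
    (φ : G →* G) (hsurj : Function.Surjective φ) :
    Function.Injective φ ∧ Function.Bijective φ := by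
  obtain ⟨c, hc⟩ := Subgroup.nilpotent_iff_lowerCentralSeries.mp ‹Group.IsNilpotent G›
  have hinj : Function.Injective φ :=
    Monoid.End.injective_of_surjective_of_forall_fg (fg_of_lowerCentralSeries_eq_bot hc) hsurj
  exact ⟨hinj, hinj, hsurj⟩

/-- Let `G` be a finitely generated torsion-free nilpotent group and let `φ : G → G` be a
surjective group homomorphism. Then `φ` is injective; in particular, `φ` is an
automorphism (a bijective endomorphism) of `G`. -/
theorem surjective_endo_of_fg_torsionFree_nilpotent_is_injective
    {G : Type*} [Group G] [Group.FG G] [Group.IsNilpotent G]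
    (htf : Monoid.IsTorsionFree G) (φ : G →* G) (hsurj : Function.Surjective φ) :
    Function.Injective φ ∧ Function.Bijective φ :=
  surjective_endo_of_fg_torsionFree_nilpotent_is_injective_general φ hsurj
end

section
/- Let G be a finitely generated torsion-free nilpotent group and let φ : G → G be a group homomorphism such that the induced endomorphism φ_1 of the quotient G/γ_2(G) is an automorphism. Then φ is an automorphism of G. -/
/-!
Surjectivity: since `φ` induces a surjection on `G/γ₂(G)`, the image of `φ` together with `γ₂(G)`
generates `G`; in a nilpotent group such a subgroup is already everything, as one sees by induction
on the nilpotency class after passing to `G/Z(G)`.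

Injectivity: a finitely generated nilpotent group satisfies the maximal condition on subgroups.
Indeed, if `γₙ(G)` is the last nontrivial term of the lower central series, it is central, and it is
generated by the commutators `⁅x, s⁆` with `s` in a finite generating set of `G` and `x` in a finite
set generating `γₙ₋₁(G)` modulo `γₙ(G)` (the commutator being bimultiplicative there); so `G` is an
extension of the Noetherian group `G/γₙ(G)` by a finitely generated abelian group. In a group with
the maximal condition the kernels of the iterates of a surjective endomorphism stabilise, which
forces the endomorphism to be injective.
-/

open Subgroup
open scoped commutatorElement

section Commutators

variable {G : Type*} [Group G]

theorem commutatorElement_mul_left_of_mem_center {y₁ y₂ g : G} (h : ⁅y₂, g⁆ ∈ center G) :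
    ⁅y₁ * y₂, g⁆ = ⁅y₂, g⁆ * ⁅y₁, g⁆ := by
  rw [show ⁅y₁ * y₂, g⁆ = y₁ * ⁅y₂, g⁆ * y₁⁻¹ * ⁅y₁, g⁆ by group, mem_center_iff.mp h y₁,
    mul_inv_cancel_right]

theorem commutatorElement_inv_left_of_mem_center {y g : G} (h : ⁅y, g⁆ ∈ center G) :
    ⁅y⁻¹, g⁆ = ⁅y, g⁆⁻¹ := by
  rw [show ⁅y⁻¹, g⁆ = y⁻¹ * ⁅y, g⁆⁻¹ * y⁻¹⁻¹ by group,
    mem_center_iff.mp (inv_mem h) y⁻¹, mul_inv_cancel_right]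

theorem commutatorElement_mul_right_of_mem_center {y g₁ g₂ : G} (h : ⁅y, g₂⁆ ∈ center G) :
    ⁅y, g₁ * g₂⁆ = ⁅y, g₁⁆ * ⁅y, g₂⁆ := by
  rw [show ⁅y, g₁ * g₂⁆ = ⁅y, g₁⁆ * (g₁ * ⁅y, g₂⁆ * g₁⁻¹) by group, mem_center_iff.mp h g₁,
    mul_inv_cancel_right]

theorem commutatorElement_inv_right_of_mem_center {y g : G} (h : ⁅y, g⁆ ∈ center G) :
    ⁅y, g⁻¹⁆ = ⁅y, g⁆⁻¹ := by
  rw [show ⁅y, g⁻¹⁆ = g⁻¹ * ⁅y, g⁆⁻¹ * g⁻¹⁻¹ by group,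
    mem_center_iff.mp (inv_mem h) g⁻¹, mul_inv_cancel_right]

theorem commutatorElement_mul_mul_of_mem_center {a b z w : G} (hz : z ∈ center G)
    (hw : w ∈ center G) : ⁅a * z, b * w⁆ = ⁅a, b⁆ := by
  have hzc : ⁅z, b * w⁆ = 1 :=
    commutatorElement_eq_one_iff_mul_comm.mpr (mem_center_iff.mp hz _).symm
  have haw : ⁅a, w⁆ = 1 :=
    commutatorElement_eq_one_iff_mul_comm.mpr (mem_center_iff.mp hw a)
  rw [commutatorElement_mul_left_of_mem_center (hzc ▸ one_mem _), hzc, one_mul,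
    commutatorElement_mul_right_of_mem_center (haw ▸ one_mem _), haw, mul_one]

theorem Subgroup.commutator_le_of_sup_center_eq_top {H : Subgroup G} (h : H ⊔ center G = ⊤) :
    _root_.commutator G ≤ H := by
  rw [_root_.commutator_def, commutator_le]
  intro g₁ _ g₂ _
  have hmem : ∀ g : G, g ∈ ((H ⊔ center G : Subgroup G) : Set G) := fun g => h ▸ mem_top g
  simp only [mul_normal] at hmem
  obtain ⟨a, ha, z, hz, rfl⟩ := hmem g₁
  obtain ⟨b, hb, w, hw, rfl⟩ := hmem g₂
  rw [commutatorElement_mul_mul_of_mem_center hz hw, commutatorElement_def]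
  exact mul_mem (mul_mem (mul_mem ha hb) (inv_mem ha)) (inv_mem hb)

theorem Subgroup.map_commutator_of_surjective {H : Type*} [Group H] {f : G →* H}
    (hf : Function.Surjective f) : (_root_.commutator G).map f = _root_.commutator H := by
  rw [map_commutator_eq, MonoidHom.range_eq_top.mpr hf, _root_.commutator_def]

theorem Subgroup.eq_top_of_sup_commutator_eq_top [Group.IsNilpotent G] {H : Subgroup G}
    (h : H ⊔ _root_.commutator G = ⊤) : H = ⊤ := by
  revert H
  refine Group.nilpotent_center_quotient_ind
    (P := fun G _ _ => ∀ {H : Subgroup G}, H ⊔ _root_.commutator G = ⊤ → H = ⊤) G ?_ ?_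
  · intro G _ _ H _
    exact Subsingleton.elim _ _
  · intro G _ _ ih H h
    have hπ := QuotientGroup.mk'_surjective (center G)
    have hmap : H.map (QuotientGroup.mk' (center G)) ⊔ _root_.commutator (G ⧸ center G) = ⊤ := by
      rw [← map_commutator_of_surjective hπ, ← map_sup, h, map_top_of_surjective _ hπ]
    have hcen : H ⊔ center G = ⊤ := by
      rw [eq_top_iff, ← QuotientGroup.ker_mk' (center G), ← map_le_map_iff,
        map_top_of_surjective _ hπ, ih hmap]
    rw [← h, sup_eq_left.mpr (commutator_le_of_sup_center_eq_top hcen)]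

end Commutators

theorem MonoidHom.range_sup_commutator_eq_top {G H : Type*} [Group G] [Group H] {φ : G →* H}
    (h : Function.Surjective (Abelianization.map φ)) : φ.range ⊔ commutator H = ⊤ := by
  have hof : Function.Surjective (Abelianization.of : H →* Abelianization H) :=
    QuotientGroup.mk'_surjective _
  rw [eq_top_iff, ← Abelianization.ker_of, ← Subgroup.map_le_map_iff, map_top_of_surjective _ hof]
  rintro x -
  obtain ⟨y, rfl⟩ := h x
  induction y using QuotientGroup.induction_on with
  | H g => exact ⟨φ g, ⟨g, rfl⟩, rfl⟩

def Group.IsNoetherian (G : Type*) [Group G] : Prop :=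
  ∀ H : Subgroup G, H.FG

section Noetherian

variable {G : Type*} [Group G]

theorem Subgroup.exists_finite_subset_le_closure_sup {N H : Subgroup G} [N.Normal]
    (hH : (H.map (QuotientGroup.mk' N)).FG) :
    ∃ X ⊆ (H : Set G), X.Finite ∧ H ≤ closure X ⊔ N := by
  obtain ⟨U, hUH, hUfin⟩ := (fg_iff _).mp hH
  have hU : U ⊆ QuotientGroup.mk' N '' H := by
    rw [← coe_map, ← hUH]
    exact subset_closure
  obtain ⟨X, hXH, hXfin, hX⟩ := Set.exists_subset_image_finite_and
    (p := fun V => closure V = H.map (QuotientGroup.mk' N)) |>.mp ⟨U, hU, hUfin, hUH⟩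
  refine ⟨X, hXH, hXfin, ?_⟩
  rw [← QuotientGroup.ker_mk' N, ← map_le_map_iff, MonoidHom.map_closure, hX]

theorem Subgroup.fg_of_fg_inf_of_fg_map {N H : Subgroup G} [N.Normal] (hHN : (H ⊓ N).FG)
    (hH : (H.map (QuotientGroup.mk' N)).FG) : H.FG := by
  obtain ⟨X, hXH, hXfin, hle⟩ := exists_finite_subset_le_closure_sup hH
  obtain ⟨Y, hY, hYfin⟩ := (fg_iff _).mp hHN
  refine (fg_iff H).mpr ⟨X ∪ Y, le_antisymm ?_ ?_, hXfin.union hYfin⟩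
  · rw [closure_le]
    exact Set.union_subset hXH fun y hy => (hY ▸ subset_closure hy : y ∈ H ⊓ N).1
  · intro h hh
    have hh' : h ∈ ((closure X ⊔ N : Subgroup G) : Set G) := hle hh
    obtain ⟨x, hx, n, hn, rfl⟩ := mul_normal (closure X) N ▸ hh'
    have hxH : x ∈ H := closure_le H |>.mpr hXH hx
    have hnH : n ∈ H := by simpa using mul_mem (inv_mem hxH) hh
    exact mul_mem (closure_mono Set.subset_union_left hx)
      (closure_mono Set.subset_union_right (hY ▸ ⟨hnH, hn⟩ : n ∈ closure Y))

theorem Group.IsNoetherian.of_commGroup {A : Type*} [CommGroup A] [Group.FG A] :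
    Group.IsNoetherian A := by
  intro H
  have : _root_.IsNoetherian ℤ (Additive A) := isNoetherian_of_isNoetherianRing_of_finite ℤ _
  rw [fg_iff_add_fg, ← AddSubgroup.toIntSubmodule_toAddSubgroup H.toAddSubgroup,
    ← Submodule.fg_iff_addSubgroup_fg]
  exact _root_.IsNoetherian.noetherian _

theorem Subgroup.FG.of_le_of_le_center {N K : Subgroup G} (hN : N.FG) (hNc : N ≤ center G)
    (hKN : K ≤ N) : K.FG := by
  let _ : CommGroup N :=
    { mul_comm := fun a b => Subtype.ext (mem_center_iff.mp (hNc b.2) a) }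
  have : Group.FG N := (Group.fg_iff_subgroup_fg N).mpr hN
  have : Group.FG (K.subgroupOf N) :=
    (Group.fg_iff_subgroup_fg _).mpr (Group.IsNoetherian.of_commGroup _)
  exact (Group.fg_iff_subgroup_fg K).mp <|
    Group.fg_of_surjective (f := (subgroupOfEquivOfLe hKN).toMonoidHom) (MulEquiv.surjective _)

theorem Group.IsNoetherian.of_quotient_of_le_center {N : Subgroup G} [N.Normal] (hN : N.FG)
    (hNc : N ≤ center G) (hQ : Group.IsNoetherian (G ⧸ N)) : Group.IsNoetherian G :=
  fun _ => fg_of_fg_inf_of_fg_map (hN.of_le_of_le_center hNc inf_le_right) (hQ _)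

theorem Subgroup.commutator_mem_center_of_mem_upperCentralSeries_two {y : G}
    (hy : y ∈ upperCentralSeries G 2) (g : G) : ⁅y, g⁆ ∈ center G := by
  rw [← upperCentralSeries_one]
  exact mem_upperCentralSeries_succ_iff.mp hy g

theorem Subgroup.commutator_closure_sup_center_le {X S : Set G}
    (hX : X ⊆ upperCentralSeries G 2) (hS : closure S = ⊤) :
    ⁅closure X ⊔ center G, ⊤⁆ ≤ closure (Set.image2 (⁅·, ·⁆) X S) := by
  have hcen : ∀ y ∈ closure X ⊔ center G, ∀ g : G, ⁅y, g⁆ ∈ center G := by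
    refine fun y hy => commutator_mem_center_of_mem_upperCentralSeries_two ?_
    refine sup_le ((closure_le _).mpr hX) ?_ hy
    exact upperCentralSeries_one G ▸ upperCentralSeries_mono G (by norm_num)
  have hXS : ∀ x ∈ X, ∀ g : G, ⁅x, g⁆ ∈ closure (Set.image2 (⁅·, ·⁆) X S) := by
    intro x hx g
    have hxZ := hcen x (mem_sup_left (subset_closure hx))
    have hg : g ∈ closure S := hS ▸ mem_top g
    induction hg using closure_induction with
    | mem s hs => exact subset_closure (Set.mem_image2_of_mem hx hs)
    | one => simp
    | mul g₁ g₂ _ _ ih₁ ih₂ =>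
      rw [commutatorElement_mul_right_of_mem_center (hxZ g₂)]
      exact mul_mem ih₁ ih₂
    | inv g _ ih =>
      rw [commutatorElement_inv_right_of_mem_center (hxZ g)]
      exact inv_mem ih
  rw [commutator_le]
  intro y hy g _
  have hsup : closure X ⊔ center G = closure (X ∪ center G) := by
    rw [closure_union, closure_eq]
  rw [hsup] at hy hcen
  induction hy using closure_induction with
  | mem y hy =>
    rcases hy with hyX | hyZ
    · exact hXS y hyX g
    · rw [commutatorElement_eq_one_iff_mul_comm.mpr (mem_center_iff.mp hyZ g).symm]
      exact one_mem _
  | one => simp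
  | mul y₁ y₂ hy₁ hy₂ ih₁ ih₂ =>
    rw [commutatorElement_mul_left_of_mem_center (hcen y₂ hy₂ g)]
    exact mul_mem ih₂ ih₁
  | inv y hy ih =>
    rw [commutatorElement_inv_left_of_mem_center (hcen y hy g)]
    exact inv_mem ih

theorem Subgroup.fg_lowerCentralSeries_of_le_center [Group.FG G] {n : ℕ}
    (hc : (⊤ : Subgroup G).lowerCentralSeries n ≤ center G)
    (hQ : Group.IsNoetherian (G ⧸ (⊤ : Subgroup G).lowerCentralSeries n)) :
    ((⊤ : Subgroup G).lowerCentralSeries n).FG := by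
  cases n with
  | zero => exact Group.fg_def.mp ‹_›
  | succ m =>
    set B := (⊤ : Subgroup G).lowerCentralSeries m
    obtain ⟨X, hXB, hXfin, hBX⟩ :=
      exists_finite_subset_le_closure_sup (hQ (B.map (QuotientGroup.mk' _)))
    obtain ⟨S, hS, hSfin⟩ := Group.fg_iff.mp ‹Group.FG G›
    have hXZ : X ⊆ upperCentralSeries G 2 := fun x hx =>
      mem_upperCentralSeries_succ_iff.mpr fun g => (upperCentralSeries_one G).symm ▸
        hc (commutator_mem_commutator (hXB hx) (mem_top g))
    refine (fg_iff _).mpr ⟨Set.image2 (⁅·, ·⁆) X S, le_antisymm ?_ ?_, hXfin.image2 _ hSfin⟩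
    · rw [closure_le]
      rintro _ ⟨x, hx, s, -, rfl⟩
      exact commutator_mem_commutator (hXB hx) (mem_top s)
    · calc ⁅B, ⊤⁆ ≤ ⁅closure X ⊔ center G, ⊤⁆ :=
            commutator_mono (hBX.trans (sup_le_sup_left hc _)) le_rfl
        _ ≤ _ := commutator_closure_sup_center_le hXZ hS

theorem Group.IsNoetherian.of_lowerCentralSeries_eq_bot [Group.FG G] {n : ℕ}
    (hn : (⊤ : Subgroup G).lowerCentralSeries n = ⊥) : Group.IsNoetherian G := by
  induction n generalizing G with
  | zero =>
    intro H
    have hH : H = ⊥ := eq_bot_iff.mpr (le_top.trans hn.le)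
    exact hH ▸ FG.bot
  | succ n ih =>
    set A := (⊤ : Subgroup G).lowerCentralSeries n
    have hA : A ≤ center G := by
      rw [← centralizer_univ, ← coe_top]
      exact commutator_eq_bot_iff_le_centralizer.mp hn
    have hQ : Group.IsNoetherian (G ⧸ A) := ih <| by
      rw [← map_top_of_surjective _ (QuotientGroup.mk'_surjective A), ← map_lowerCentralSeries,
        Subgroup.map_eq_bot_iff, QuotientGroup.ker_mk']
    exact of_quotient_of_le_center (fg_lowerCentralSeries_of_le_center hA hQ) hA hQ

theorem Group.IsNoetherian.of_isNilpotent [Group.FG G] [Group.IsNilpotent G] :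
    Group.IsNoetherian G :=
  have ⟨_, hn⟩ := Subgroup.nilpotent_iff_lowerCentralSeries.mp ‹Group.IsNilpotent G›
  of_lowerCentralSeries_eq_bot hn

theorem Group.IsNoetherian.exists_le_of_monotone (hG : Group.IsNoetherian G)
    {H : ℕ → Subgroup G} (hH : Monotone H) : ∃ n, ∀ m, H m ≤ H n := by
  obtain ⟨S, hS⟩ := hG (⨆ m, H m)
  have hSH : (S : Set G) ⊆ ⋃ m, (H m : Set G) := by
    rw [← coe_iSup_of_directed hH.directed_le, ← hS]
    exact subset_closure
  obtain ⟨n, hn⟩ := Directed.exists_mem_subset_of_finset_subset_biUnion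
    (hH.directed_le.mono_comp _ fun _ _ h => h) hSH
  exact ⟨n, fun m => (le_iSup H m).trans (hS ▸ (closure_le _).mpr hn)⟩

theorem Group.IsNoetherian.injective_of_surjective (hG : Group.IsNoetherian G) {φ : G →* G}
    (hφ : Function.Surjective φ) : Function.Injective φ := by
  -- `c^[n] ⊥` is the kernel of `φ^[n]`.
  set c := Subgroup.comap φ
  have hreflect : ∀ n {K L : Subgroup G}, c^[n] K ≤ c^[n] L → K ≤ L := by
    intro n
    induction n with
    | zero => exact id
    | succ n ih =>
      intro K L h
      rw [Function.iterate_succ_apply', Function.iterate_succ_apply'] at h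
      exact ih ((comap_le_comap_of_surjective hφ).mp h)
  obtain ⟨N, hN⟩ := hG.exists_le_of_monotone
    (Monotone.monotone_iterate_of_le_map (fun _ _ => comap_mono) (bot_le : ⊥ ≤ c ⊥))
  have hker : c ⊥ ≤ ⊥ := hreflect N (by simpa only [← Function.iterate_succ_apply] using hN (N + 1))
  rw [← MonoidHom.ker_eq_bot_iff, ← MonoidHom.comap_bot]
  exact le_bot_iff.mp hker

end Noetherian

theorem endo_of_fg_torsionFree_nilpotent_is_aut_of_abelianization_aut_general
    {G : Type*} [Group G] [Group.FG G] [Group.IsNilpotent G]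
    (φ : G →* G)
    (h : Function.Bijective (Abelianization.map φ)) :
    Function.Bijective φ := by
  have hsurj : Function.Surjective φ :=
    MonoidHom.range_eq_top.mp <| eq_top_of_sup_commutator_eq_top <|
      MonoidHom.range_sup_commutator_eq_top h.surjective
  exact ⟨Group.IsNoetherian.of_isNilpotent.injective_of_surjective hsurj, hsurj⟩

/-- Let `G` be a finitely generated torsion-free nilpotent group and `φ : G → G` a group
homomorphism such that the induced endomorphism of `G/γ₂(G)` (the abelianization) is an
automorphism. Then `φ` is an automorphism of `G`. -/
theorem endo_of_fg_torsionFree_nilpotent_is_aut_of_abelianization_aut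
    {G : Type*} [Group G] [Group.FG G] [Group.IsNilpotent G]
    (htf : ∀ g : G, g ≠ 1 → ¬IsOfFinOrder g) (φ : G →* G)
    (h : Function.Bijective (Abelianization.map φ)) :
    Function.Bijective φ :=
  endo_of_fg_torsionFree_nilpotent_is_aut_of_abelianization_aut_general φ h
end

section
/- Let Γ be a finite undirected simple graph on n vertices. Then the commutator subgroup γ_2(G_Γ) equals the internal direct product of the infinite cyclic subgroups ⟨y_1⟩, …, ⟨y_N⟩ and is free abelian of rank N, and the center Z(G_Γ) equals the internal direct product of γ_2(G_Γ) with the subgroups ⟨x_i⟩ for those vertices x_i of degree n−1; in particular Z(G_Γ) is free abelian of rank N + #{vertices of Γ of degree n−1}. -/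
open scoped commutatorElement

/-- Non-adjacent pairs `(i,j)` with `i < j`. -/
abbrev NonEdge {V : Type} [LinearOrder V] (Γ : SimpleGraph V) : Type :=
  {p : V × V // p.1 < p.2 ∧ ¬ Γ.Adj p.1 p.2}

abbrev GraphGens {V : Type} [LinearOrder V] (Γ : SimpleGraph V) : Type := V ⊕ NonEdge Γ

/-- The relations of the 2-step nilpotent group associated to a graph. -/
def GraphRels {V : Type} [LinearOrder V] (Γ : SimpleGraph V) : Set (FreeGroup (GraphGens Γ)) :=
  {r | (∃ i j : V, Γ.Adj i j ∧
      r = ⁅(FreeGroup.of (Sum.inl j) : FreeGroup (GraphGens Γ)), FreeGroup.of (Sum.inl i)⁆) ∨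
    (∃ p : NonEdge Γ,
      r = ⁅(FreeGroup.of (Sum.inl p.1.2) : FreeGroup (GraphGens Γ)), FreeGroup.of (Sum.inl p.1.1)⁆ *
        (FreeGroup.of (Sum.inr p))⁻¹) ∨
    (∃ (l : V) (p : NonEdge Γ),
      r = ⁅(FreeGroup.of (Sum.inl l) : FreeGroup (GraphGens Γ)), FreeGroup.of (Sum.inr p)⁆)}

/-- The 2-step nilpotent group associated to a graph. -/
abbrev GraphGroup {V : Type} [LinearOrder V] (Γ : SimpleGraph V) : Type :=
  PresentedGroup (GraphRels Γ)

/-- The generator of `GraphGroup Γ` corresponding to the vertex `i`. -/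
def xg {V : Type} [LinearOrder V] (Γ : SimpleGraph V) (i : V) : GraphGroup Γ :=
  PresentedGroup.of (Sum.inl i)

/-- The central generator of `GraphGroup Γ` corresponding to a non-adjacent pair. -/
def yg {V : Type} [LinearOrder V] (Γ : SimpleGraph V) (p : NonEdge Γ) : GraphGroup Γ :=
  PresentedGroup.of (Sum.inr p)

/-- Twisted conjugacy: `a = c * b * (φ c)⁻¹` for some `c`. -/
def TwistedConj {G : Type*} [Group G] (φ : G →* G) (a b : G) : Prop :=
  ∃ c : G, a = c * b * (φ c)⁻¹

/-- The Reidemeister number of an endomorphism: the number of twisted conjugacy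
classes, as an element of `ℕ∞`. -/
noncomputable def reidemeisterNumber {G : Type*} [Group G] (φ : G →* G) : ℕ∞ :=
  ENat.card (Quot (TwistedConj φ))

/-- The Reidemeister spectrum of a group. -/
noncomputable def reidemeisterSpectrum (G : Type*) [Group G] : Set ℕ∞ :=
  {r : ℕ∞ | ∃ φ : G ≃* G, r = reidemeisterNumber φ.toMonoidHom}

/-- `|x|_∞ : ℤ → ℕ∞`. -/
def natAbsInfty (x : ℤ) : ℕ∞ := if x = 0 then ⊤ else (x.natAbs : ℕ∞)

/-- A graph is a (simplicial) join if its vertex set can be partitioned in two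
nonempty parts such that all pairs of vertices in different parts are adjacent. -/
def IsJoinGraph {V : Type*} (Γ : SimpleGraph V) : Prop :=
  ∃ A B : Set V, A.Nonempty ∧ B.Nonempty ∧ Disjoint A B ∧ A ∪ B = Set.univ ∧
    ∀ a ∈ A, ∀ b ∈ B, Γ.Adj a b

/-!
Sending `x_i ↦ (e_i, 0)` and `y_p ↦ (0, e_p)` defines a homomorphism from `G_Γ` to the group
`Heisenberg (cocycle Γ)` of normal forms `(z, t)`. It is injective: an element of its kernel has
`z = 0`, so it dies in the abelianization (on which the `z`-coordinate has an inverse sending `e_i`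
to `x_i`), i.e. it is a product of commutators; the generators commute modulo the central subgroup
generated by the `y_p`, so it is a product of `y_p`'s, on which the map is visibly injective.
In the model, `(z, t)` commutes with every `(e_k, 0)` iff `z` vanishes at both ends of every
non-edge, i.e. iff `z` is supported on the vertices of degree `n - 1`.
-/

open Subgroup
open scoped IsMulCommutative

section Heisenberg

variable {A B : Type*} [AddCommGroup A] [AddCommGroup B]

/-- The central extension of `A` by `B` with bilinear cocycle `β`. -/
@[ext]
structure Heisenberg (β : A →+ A →+ B) where
  fst : A
  snd : B

namespace Heisenberg

variable {β : A →+ A →+ B}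

instance : Mul (Heisenberg β) :=
  ⟨fun g h => ⟨g.fst + h.fst, g.snd + h.snd + β g.fst h.fst⟩⟩
instance : One (Heisenberg β) := ⟨⟨0, 0⟩⟩
instance : Inv (Heisenberg β) := ⟨fun g => ⟨-g.fst, β g.fst g.fst - g.snd⟩⟩

@[simp] lemma mul_fst (g h : Heisenberg β) : (g * h).fst = g.fst + h.fst := rfl
@[simp] lemma mul_snd (g h : Heisenberg β) : (g * h).snd = g.snd + h.snd + β g.fst h.fst := rfl
@[simp] lemma one_fst : (1 : Heisenberg β).fst = 0 := rfl
@[simp] lemma one_snd : (1 : Heisenberg β).snd = 0 := rfl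
@[simp] lemma inv_fst (g : Heisenberg β) : g⁻¹.fst = -g.fst := rfl
@[simp] lemma inv_snd (g : Heisenberg β) : g⁻¹.snd = β g.fst g.fst - g.snd := rfl

instance : Group (Heisenberg β) :=
  Group.ofLeftAxioms
    (fun g h k => by ext <;> simp only [mul_fst, mul_snd, map_add, AddMonoidHom.add_apply] <;> abel)
    (fun g => by ext <;> simp)
    (fun g => by ext <;> simp)

lemma commutatorElement_eq (g h : Heisenberg β) :
    ⁅g, h⁆ = ⟨0, β g.fst h.fst - β h.fst g.fst⟩ := by
  rw [commutatorElement_def]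
  ext <;> simp only [mul_fst, mul_snd, inv_fst, inv_snd, map_add, map_neg, AddMonoidHom.add_apply,
    AddMonoidHom.neg_apply] <;> abel

lemma commute_iff {g h : Heisenberg β} : Commute g h ↔ β g.fst h.fst = β h.fst g.fst := by
  rw [← commutatorElement_eq_one_iff_commute, commutatorElement_eq, Heisenberg.ext_iff]
  simp [sub_eq_zero]

def fstHom : Heisenberg β →* Multiplicative A where
  toFun g := .ofAdd g.fst
  map_one' := rfl
  map_mul' _ _ := rfl

@[simp] lemma fstHom_apply (g : Heisenberg β) : fstHom g = .ofAdd g.fst := rfl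

section mkHom

variable {C : Type*} [AddCommGroup C]

def mkHom (f : C →+ A) (g : C →+ B) (hf : ∀ x y, β (f x) (f y) = 0) :
    Multiplicative C →* Heisenberg β where
  toFun x := ⟨f x.toAdd, g x.toAdd⟩
  map_one' := by ext <;> simp
  map_mul' x y := by ext <;> simp [hf]

@[simp] lemma mkHom_apply (f : C →+ A) (g : C →+ B) (hf : ∀ x y, β (f x) (f y) = 0)
    (x : Multiplicative C) : mkHom f g hf x = ⟨f x.toAdd, g x.toAdd⟩ := rfl

lemma mkHom_injective {f : C →+ A} {g : C →+ B} {hf : ∀ x y, β (f x) (f y) = 0}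
    (hfg : ∀ x, f x = 0 → g x = 0 → x = 0) : Function.Injective (mkHom f g hf) := by
  refine (injective_iff_map_eq_one _).mpr fun x hx => ?_
  rw [Heisenberg.ext_iff] at hx
  exact toAdd_eq_zero.mp (hfg _ hx.1 hx.2)

end mkHom

def inr : Multiplicative B →* Heisenberg β :=
  mkHom 0 (.id B) fun _ _ => by simp

@[simp] lemma inr_apply (b : Multiplicative B) : (inr b : Heisenberg β) = ⟨0, b.toAdd⟩ := rfl

lemma inr_injective : Function.Injective (inr : Multiplicative B → Heisenberg β) :=
  mkHom_injective fun _ _ h => h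

end Heisenberg

end Heisenberg

section FreeAbelian

variable {ι M G : Type*} [Group M] [Group G]

lemma Finsupp.multiplicative_hom_ext {f g : Multiplicative (ι →₀ ℤ) →* M}
    (h : ∀ i, f (.ofAdd (.single i 1)) = g (.ofAdd (.single i 1))) : f = g :=
  AddMonoidHom.toMultiplicativeLeft.symm.injective <|
    Finsupp.addHom_ext' fun i => AddMonoidHom.ext_int <| congrArg Additive.ofMul (h i)

noncomputable def centralLift (c : ι → G) (hc : ∀ i, c i ∈ center G) :
    Multiplicative (ι →₀ ℤ) →* G :=
  (center G).subtype.comp <| AddMonoidHom.toMultiplicativeLeft <|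
    Finsupp.liftAddHom fun i => zmultiplesHom _ (.ofMul ⟨c i, hc i⟩)

variable (c : ι → G) (hc : ∀ i, c i ∈ center G)

@[simp] lemma centralLift_single (i : ι) (k : ℤ) :
    centralLift c hc (.ofAdd (.single i k)) = c i ^ k := by
  simp [centralLift]

lemma range_centralLift : (centralLift c hc).range = closure (Set.range c) := by
  refine le_antisymm ?_ (closure_le _ |>.mpr ?_)
  · rintro _ ⟨f, rfl⟩
    rw [← ofAdd_toAdd f]
    induction f.toAdd using Finsupp.induction with
    | zero => exact one_mem _
    | single_add i k f _ _ ih =>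
      rw [ofAdd_add, map_mul, centralLift_single]
      exact mul_mem (zpow_mem (subset_closure (Set.mem_range_self i)) k) ih
  · rintro _ ⟨i, rfl⟩
    exact ⟨.ofAdd (.single i 1), by simp⟩

lemma range_centralLift_le_center : (centralLift c hc).range ≤ center G := by
  rw [range_centralLift, closure_le]
  rintro _ ⟨i, rfl⟩
  exact hc i

end FreeAbelian

lemma MonoidHom.exists_mulEquiv_of_range_eq {M G : Type*} [Group M] [Group G] {f : M →* G}
    (hf : Function.Injective f) {K : Subgroup G} (hK : f.range = K) :
    ∃ e : M ≃* K, ∀ x, (e x : G) = f x :=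
  ⟨(MonoidHom.ofInjective hf).trans (MulEquiv.subgroupCongr hK), fun _ => rfl⟩

lemma Subgroup.normal_of_le_center {G : Type*} [Group G] {N : Subgroup G} (h : N ≤ center G) :
    N.Normal :=
  ⟨fun n hn g => by rwa [mem_center_iff.mp (h hn) g, mul_inv_cancel_right]⟩

lemma commutator_le_of_closure_eq_top {G : Type*} [Group G] {S : Set G} (hS : closure S = ⊤)
    {N : Subgroup G} [N.Normal] (h : ∀ s ∈ S, ∀ t ∈ S, ⁅s, t⁆ ∈ N) :
    commutator G ≤ N := by
  rw [← Normal.quotient_commutative_iff_commutator_le]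
  set π := QuotientGroup.mk' N
  have hcomm : ∀ x ∈ π '' S, ∀ y ∈ π '' S, x * y = y * x := by
    rintro _ ⟨s, hs, rfl⟩ _ ⟨t, ht, rfl⟩
    rw [← commutatorElement_eq_one_iff_mul_comm, ← map_commutatorElement,
      QuotientGroup.mk'_apply, QuotientGroup.eq_one_iff]
    exact h s hs t ht
  have htop : closure (π '' S) = ⊤ := by
    rw [← MonoidHom.map_closure, hS, ← MonoidHom.range_eq_map, MonoidHom.range_eq_top]
    exact QuotientGroup.mk'_surjective N
  have hcc (a : G ⧸ N) : a ∈ Set.centralizer (Set.centralizer (π '' S)) :=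
    closure_le_centralizer_centralizer _ (htop ▸ mem_top a)
  exact ⟨⟨fun a b => Set.centralizer_centralizer_comm_of_comm hcomm _ (hcc a) _ (hcc b)⟩⟩

lemma PresentedGroup.mem_center_iff {α : Type*} {rels : Set (FreeGroup α)}
    {g : PresentedGroup rels} :
    g ∈ center (PresentedGroup rels) ↔ ∀ x, Commute g (.of x) := by
  rw [center_eq_iInf (PresentedGroup.closure_range_of rels)]
  simp [mem_centralizer_singleton_iff, Commute, SemiconjBy, eq_comm]

section NonEdge

variable {n : ℕ} {Γ : SimpleGraph (Fin n)}

lemma NonEdge.val_ne_of_adj (p : NonEdge Γ) {i j : Fin n} (h : Γ.Adj i j) : p.1 ≠ (i, j) :=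
  fun hp => p.2.2 (hp ▸ h)

lemma NonEdge.val_ne_swap (p q : NonEdge Γ) : q.1 ≠ (p.1.2, p.1.1) := by
  intro hq
  have := q.2.1
  rw [hq] at this
  exact this.asymm p.2.1

end NonEdge

namespace GraphGroup

open Finsupp

variable {n : ℕ} (Γ : SimpleGraph (Fin n))

/-- `(z, t)` stands for the normal form `x_1^{z_1} ⋯ x_n^{z_n} y^t`; the value of `cocycle z w`
at `(i, j)` is the power of `y_{ij}` produced by collecting `x_i^{w_i}` past `x_j^{z_j}`. -/
noncomputable def cocycle :
    (Fin n →₀ ℤ) →+ (Fin n →₀ ℤ) →+ (NonEdge Γ →₀ ℤ) :=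
  AddMonoidHom.mk' (fun z => AddMonoidHom.mk'
      (fun w => equivFunOnFinite.symm fun p => z p.1.2 * w p.1.1)
      (fun _ _ => by ext; simp [mul_add]))
    (fun _ _ => by ext; simp [add_mul])

@[simp] lemma cocycle_apply (z w : Fin n →₀ ℤ) (p : NonEdge Γ) :
    cocycle Γ z w p = z p.1.2 * w p.1.1 := by
  simp [cocycle]

lemma cocycle_single_single (i j : Fin n) (p : NonEdge Γ) :
    cocycle Γ (single j 1) (single i 1) p = if p.1 = (i, j) then 1 else 0 := by
  simp only [cocycle_apply, single_apply, Prod.ext_iff]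
  split_ifs <;> simp_all

noncomputable def modelGen : GraphGens Γ → Heisenberg (cocycle Γ) :=
  Sum.elim (fun i => ⟨single i 1, 0⟩) (fun p => ⟨0, single p 1⟩)

lemma lift_modelGen_eq_one : ∀ r ∈ GraphRels Γ, FreeGroup.lift (modelGen Γ) r = 1 := by
  rintro r (⟨i, j, hij, rfl⟩ | ⟨p, rfl⟩ | ⟨l, p, rfl⟩) <;>
    simp only [map_mul, map_inv, map_commutatorElement, FreeGroup.lift_apply_of, modelGen,
      Sum.elim_inl, Sum.elim_inr, Heisenberg.commutatorElement_eq, mul_inv_eq_one] <;>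
    refine Heisenberg.ext rfl ?_ <;> ext q <;>
    simp only [coe_sub, Pi.sub_apply, cocycle_single_single]
  · rw [if_neg (NonEdge.val_ne_of_adj q hij), if_neg (NonEdge.val_ne_of_adj q hij.symm)]
    rfl
  · rw [if_neg (NonEdge.val_ne_swap p q), sub_zero, single_apply]
    simp [Subtype.ext_iff, eq_comm]
  · simp

noncomputable def toModel : GraphGroup Γ →* Heisenberg (cocycle Γ) :=
  PresentedGroup.toGroup (lift_modelGen_eq_one Γ)

@[simp] lemma toModel_xg (i : Fin n) : toModel Γ (xg Γ i) = ⟨single i 1, 0⟩ :=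
  PresentedGroup.toGroup.of _

@[simp] lemma toModel_yg (p : NonEdge Γ) : toModel Γ (yg Γ p) = ⟨0, single p 1⟩ :=
  PresentedGroup.toGroup.of _

variable {Γ} in
lemma commutatorElement_xg_of_adj {i j : Fin n} (h : Γ.Adj i j) : ⁅xg Γ j, xg Γ i⁆ = 1 := by
  have := PresentedGroup.one_of_mem (rels := GraphRels Γ) (Or.inl ⟨i, j, h, rfl⟩)
  rwa [map_commutatorElement] at this

lemma commutatorElement_xg_nonEdge (p : NonEdge Γ) : ⁅xg Γ p.1.2, xg Γ p.1.1⁆ = yg Γ p := by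
  have := PresentedGroup.one_of_mem (rels := GraphRels Γ) (Or.inr (Or.inl ⟨p, rfl⟩))
  rwa [map_mul, map_inv, map_commutatorElement, mul_inv_eq_one] at this

lemma commute_xg_yg (l : Fin n) (p : NonEdge Γ) : Commute (xg Γ l) (yg Γ p) := by
  have := PresentedGroup.one_of_mem (rels := GraphRels Γ) (Or.inr (Or.inr ⟨l, p, rfl⟩))
  rwa [map_commutatorElement, commutatorElement_eq_one_iff_commute] at this

lemma yg_mem_commutator (p : NonEdge Γ) : yg Γ p ∈ commutator (GraphGroup Γ) := by
  rw [← commutatorElement_xg_nonEdge]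
  exact commutator_mem_commutator (mem_top _) (mem_top _)

lemma yg_mem_center (p : NonEdge Γ) : yg Γ p ∈ center (GraphGroup Γ) := by
  have hx (l : Fin n) : Commute (yg Γ p) (xg Γ l) := (commute_xg_yg Γ l p).symm
  refine PresentedGroup.mem_center_iff.mpr ?_
  rintro (l | q)
  · exact hx l
  · change Commute _ (yg Γ q)
    rw [← commutatorElement_xg_nonEdge Γ q, commutatorElement_def]
    exact (((hx _).mul_right (hx _)).mul_right (hx _).inv_right).mul_right (hx _).inv_right

variable {Γ} in
lemma xg_mem_center_of_isUniversal {i : Fin n} (h : Γ.IsUniversal i) :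
    xg Γ i ∈ center (GraphGroup Γ) := by
  refine PresentedGroup.mem_center_iff.mpr ?_
  rintro (j | q)
  · change Commute _ (xg Γ j)
    obtain rfl | hij := eq_or_ne i j
    · rfl
    · exact (commutatorElement_eq_one_iff_commute.mp (commutatorElement_xg_of_adj (h hij))).symm
  · exact commute_xg_yg Γ i q

lemma commutatorElement_xg_mem_closure (i j : Fin n) :
    ⁅xg Γ i, xg Γ j⁆ ∈ closure (Set.range (yg Γ)) := by
  rcases lt_trichotomy i j with h | rfl | h
  · by_cases hadj : Γ.Adj i j
    · simp [commutatorElement_xg_of_adj hadj.symm]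
    · rw [← commutatorElement_inv, commutatorElement_xg_nonEdge Γ ⟨(i, j), h, hadj⟩]
      exact inv_mem (subset_closure (Set.mem_range_self _))
  · simp
  · by_cases hadj : Γ.Adj j i
    · simp [commutatorElement_xg_of_adj hadj]
    · rw [commutatorElement_xg_nonEdge Γ ⟨(j, i), h, hadj⟩]
      exact subset_closure (Set.mem_range_self _)

lemma ker_fstHom_comp_toModel_le_commutator :
    (Heisenberg.fstHom.comp (toModel Γ)).ker ≤ commutator (GraphGroup Γ) := by
  let u := centralLift (fun i => Abelianization.of (xg Γ i)) (by simp [center_eq_top])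
  have hu : u.comp (Abelianization.lift (Heisenberg.fstHom.comp (toModel Γ))) = .id _ := by
    refine Abelianization.hom_ext _ _ (PresentedGroup.ext ?_)
    rintro (i | p)
    · change u (Abelianization.lift _ (Abelianization.of (xg Γ i))) = Abelianization.of (xg Γ i)
      simp [u]
    · change u (Abelianization.lift _ (Abelianization.of (yg Γ p))) = Abelianization.of (yg Γ p)
      have : Abelianization.of (yg Γ p) = 1 := by
        rw [← MonoidHom.mem_ker, Abelianization.ker_of]
        exact yg_mem_commutator Γ p
      simp [this]
  intro g hg
  rw [← Abelianization.ker_of, MonoidHom.mem_ker]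
  calc Abelianization.of g = u (Abelianization.lift _ (Abelianization.of g)) := by
        rw [← MonoidHom.comp_apply, hu, MonoidHom.id_apply]
    _ = 1 := by rw [Abelianization.lift_apply_of, hg, map_one]

noncomputable def yLift : Multiplicative (NonEdge Γ →₀ ℤ) →* GraphGroup Γ :=
  centralLift (yg Γ) (yg_mem_center Γ)

lemma toModel_comp_yLift : (toModel Γ).comp (yLift Γ) = Heisenberg.inr :=
  Finsupp.multiplicative_hom_ext fun p => by simp [yLift]

lemma yLift_injective : Function.Injective (yLift Γ) := by
  refine .of_comp (f := toModel Γ) ?_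
  rw [← MonoidHom.coe_comp, toModel_comp_yLift]
  exact Heisenberg.inr_injective

lemma range_yLift : (yLift Γ).range = commutator (GraphGroup Γ) := by
  have hcenter := range_centralLift_le_center (yg Γ) (yg_mem_center Γ)
  rw [range_centralLift] at hcenter
  have := normal_of_le_center hcenter
  rw [yLift, range_centralLift]
  refine le_antisymm (closure_le _ |>.mpr ?_)
    (commutator_le_of_closure_eq_top (PresentedGroup.closure_range_of _) ?_)
  · rintro _ ⟨p, rfl⟩
    exact yg_mem_commutator Γ p
  · have hy (g : GraphGroup Γ) (q : NonEdge Γ) : g * yg Γ q = yg Γ q * g :=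
      mem_center_iff.mp (yg_mem_center Γ q) g
    rintro _ ⟨a, rfl⟩ _ ⟨j | q, rfl⟩
    · rcases a with i | p
      · exact commutatorElement_xg_mem_closure Γ i j
      · convert Subgroup.one_mem _
        exact commutatorElement_eq_one_iff_mul_comm.mpr (hy _ p).symm
    · convert Subgroup.one_mem _
      exact commutatorElement_eq_one_iff_mul_comm.mpr (hy _ q)

lemma toModel_injective : Function.Injective (toModel Γ) := by
  refine (injective_iff_map_eq_one _).mpr fun g hg => ?_
  obtain ⟨f, rfl⟩ : g ∈ (yLift Γ).range := by
    rw [range_yLift]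
    exact ker_fstHom_comp_toModel_le_commutator Γ (by simp [hg])
  rw [← MonoidHom.comp_apply, toModel_comp_yLift] at hg
  rw [Heisenberg.inr_injective (hg.trans (map_one _).symm), map_one]

lemma cocycle_eq_zero_of_isUniversal {z : Fin n →₀ ℤ}
    (hz : ∀ v ∈ z.support, Γ.IsUniversal v) (w : Fin n →₀ ℤ) : cocycle Γ z w = 0 := by
  ext p
  suffices z p.1.2 = 0 by simp [this]
  by_contra h
  exact p.2.2 (hz _ (mem_support_iff.mpr h) p.2.1.ne').symm

lemma isUniversal_of_forall_cocycle_single_comm {z : Fin n →₀ ℤ}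
    (hz : ∀ k, cocycle Γ z (single k 1) = cocycle Γ (single k 1) z) :
    ∀ v ∈ z.support, Γ.IsUniversal v := by
  intro v hv w hvw
  by_contra hadj
  apply mem_support_iff.mp hv
  rcases hvw.lt_or_gt with h | h
  · simpa [single_apply, h.ne'] using (DFunLike.congr_fun (hz w) ⟨(v, w), h, hadj⟩).symm
  · simpa [single_apply, h.ne'] using
      DFunLike.congr_fun (hz w) ⟨(w, v), h, fun h' => hadj h'.symm⟩

section Center

variable [DecidableRel Γ.Adj]

lemma degree_eq_sub_one_iff (v : Fin n) : Γ.degree v = n - 1 ↔ Γ.IsUniversal v := by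
  simpa using Γ.degree_eq_card_sub_one v

noncomputable def centerLift :
    Multiplicative ((NonEdge Γ ⊕ {i : Fin n // Γ.degree i = n - 1}) →₀ ℤ) →*
      GraphGroup Γ :=
  centralLift (Sum.elim (yg Γ) fun i => xg Γ i.1) <| by
    rintro (p | i)
    exacts [yg_mem_center Γ p,
      xg_mem_center_of_isUniversal ((degree_eq_sub_one_iff Γ i.1).mp i.2)]

noncomputable def centerModel :
    Multiplicative ((NonEdge Γ ⊕ {i : Fin n // Γ.degree i = n - 1}) →₀ ℤ) →*
      Heisenberg (cocycle Γ) :=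
  Heisenberg.mkHom
    ((embDomain.addMonoidHom (.subtype _)).comp
      ((AddMonoidHom.snd _ _).comp sumFinsuppAddEquivProdFinsupp.toAddMonoidHom))
    ((AddMonoidHom.fst _ _).comp sumFinsuppAddEquivProdFinsupp.toAddMonoidHom)
    fun s _ => cocycle_eq_zero_of_isUniversal Γ (by
      intro v hv
      simp only [AddMonoidHom.coe_comp, Function.comp_apply, embDomain.addMonoidHom_apply,
        support_embDomain, Finset.mem_map] at hv
      obtain ⟨i, -, rfl⟩ := hv
      exact (degree_eq_sub_one_iff Γ i).mp i.2) _

lemma toModel_comp_centerLift : (toModel Γ).comp (centerLift Γ) = centerModel Γ := by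
  refine Finsupp.multiplicative_hom_ext ?_
  rintro (p | i) <;> simp [centerLift, centerModel]

lemma centerLift_injective : Function.Injective (centerLift Γ) := by
  refine .of_comp (f := toModel Γ) ?_
  rw [← MonoidHom.coe_comp, toModel_comp_centerLift]
  refine Heisenberg.mkHom_injective fun s h1 h2 => ?_
  simp only [AddMonoidHom.coe_comp, Function.comp_apply, embDomain.addMonoidHom_apply,
    embDomain_eq_zero] at h1
  exact sumFinsuppAddEquivProdFinsupp.map_eq_zero_iff.mp (Prod.ext h2 h1)

lemma mem_range_centerModel {h : Heisenberg (cocycle Γ)}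
    (hh : ∀ v ∈ h.fst.support, Γ.IsUniversal v) : h ∈ (centerModel Γ).range := by
  refine ⟨.ofAdd (sumFinsuppAddEquivProdFinsupp.symm
    (h.snd, h.fst.subtypeDomain fun v => Γ.degree v = n - 1)), ?_⟩
  ext1
  · simpa [centerModel, ← extendDomain_eq_embDomain_subtype] using
      extendDomain_subtypeDomain _ fun v hv => (degree_eq_sub_one_iff Γ v).mpr (hh v hv)
  · simp [centerModel]

lemma range_centerLift : (centerLift Γ).range = center (GraphGroup Γ) := by
  refine le_antisymm (range_centralLift_le_center _ _) fun g hg => ?_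
  have hcomm (k : Fin n) : Commute (toModel Γ g) ⟨single k 1, 0⟩ := by
    have : Commute g (xg Γ k) := (mem_center_iff.mp hg (xg Γ k)).symm
    simpa using this.map (toModel Γ)
  obtain ⟨s, hs⟩ := mem_range_centerModel Γ <|
    isUniversal_of_forall_cocycle_single_comm Γ fun k => Heisenberg.commute_iff.mp (hcomm k)
  refine ⟨s, toModel_injective Γ ?_⟩
  rw [← MonoidHom.comp_apply, toModel_comp_centerLift, hs]

end Center

end GraphGroup

/-- The internal direct products are encoded as isomorphisms from free abelian groups carrying
the basis to the `y_p` (resp. the `y_p` and the central `x_i`). -/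
theorem commutator_and_center_of_graphGroup
    {n : ℕ} (Γ : SimpleGraph (Fin n)) [DecidableRel Γ.Adj] :
    (∃ e : Multiplicative (NonEdge Γ →₀ ℤ) ≃* commutator (GraphGroup Γ),
      ∀ p : NonEdge Γ,
        ((e (Multiplicative.ofAdd (Finsupp.single p 1)) : commutator (GraphGroup Γ)) :
          GraphGroup Γ) = yg Γ p) ∧
    (∃ e : Multiplicative ((NonEdge Γ ⊕ {i : Fin n // Γ.degree i = n - 1}) →₀ ℤ) ≃*
        Subgroup.center (GraphGroup Γ),
      (∀ p : NonEdge Γ,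
        ((e (Multiplicative.ofAdd (Finsupp.single (Sum.inl p) 1)) :
          Subgroup.center (GraphGroup Γ)) : GraphGroup Γ) = yg Γ p) ∧
      (∀ i : {i : Fin n // Γ.degree i = n - 1},
        ((e (Multiplicative.ofAdd (Finsupp.single (Sum.inr i) 1)) :
          Subgroup.center (GraphGroup Γ)) : GraphGroup Γ) = xg Γ i.1)) := by
  obtain ⟨e₁, he₁⟩ := MonoidHom.exists_mulEquiv_of_range_eq
    (GraphGroup.yLift_injective Γ) (GraphGroup.range_yLift Γ)
  obtain ⟨e₂, he₂⟩ := MonoidHom.exists_mulEquiv_of_range_eq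
    (GraphGroup.centerLift_injective Γ) (GraphGroup.range_centerLift Γ)
  exact ⟨⟨e₁, fun p => by simp [he₁, GraphGroup.yLift]⟩,
    ⟨e₂, fun p => by simp [he₂, GraphGroup.centerLift],
      fun i => by simp [he₂, GraphGroup.centerLift]⟩⟩
end
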